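/- Let (Ω, ℱ, P) be a probability space and let U : (0,∞) → ℝ be continuously differentiable, strictly increasing and strictly concave, with U'(0+) = +∞, U'(∞) = 0 and limsup_{x→∞} x U'(x)/U(x) < 1; extend U to 0 by U(0) = lim_{x↓0} U(x) ∈ [−∞, ∞). Let D be a convex set of nonnegative random variables such that E[U(W)] is well-defined in [−∞, +∞] for every W ∈ D, let α > 0 with U(α) > −∞, and let V* ∈ D satisfy E[U(V*)] = sup_{W∈D} E[U(W)] < ∞. Then for every nonnegative random variable V with V + α ∈ D one has E[V · U'(V*)] ≤ E[U(V*)] − U(α) < ∞. -/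

import Mathlib

open MeasureTheory Set Filter Topology ENNReal

/-- The positive part of an extended real number, as an element of `ℝ≥0∞`. -/
noncomputable def erealPosPart (x : EReal) : ℝ≥0∞ :=
  if x = ⊤ then ⊤ else ENNReal.ofReal x.toReal

/-- The utility function `U : (0,∞) → ℝ` extended to `0` by the (possibly infinite)
value `U₀ ∈ [−∞, ∞)`. -/
noncomputable def utilAt (U : ℝ → ℝ) (U₀ : EReal) (x : ℝ) : EReal :=
  if x = 0 then U₀ else (U x : EReal)

/-- The expected utility `E[U(W)] ∈ [−∞, +∞]` of a nonnegative random variable `W`,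
defined as the difference of the integrals of the positive and negative parts. -/
noncomputable def expUtil {Ω : Type*} [MeasurableSpace Ω] (P : Measure Ω)
    (U : ℝ → ℝ) (U₀ : EReal) (W : Ω → ℝ) : EReal :=
  ((∫⁻ ω, erealPosPart (utilAt U U₀ (W ω)) ∂P : ℝ≥0∞) : EReal)
    - ((∫⁻ ω, erealPosPart (-(utilAt U U₀ (W ω))) ∂P : ℝ≥0∞) : EReal)

/-- `E[U(W)]` is well-defined in `[−∞, +∞]`: the positive part or the negative part of
`U(W)` has finite integral. -/
def ExpUtilWellDef {Ω : Type*} [MeasurableSpace Ω] (P : Measure Ω)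
    (U : ℝ → ℝ) (U₀ : EReal) (W : Ω → ℝ) : Prop :=
  (∫⁻ ω, erealPosPart (utilAt U U₀ (W ω)) ∂P) ≠ ⊤
    ∨ (∫⁻ ω, erealPosPart (-(utilAt U U₀ (W ω))) ∂P) ≠ ⊤

/-!
Perturb the optimum towards `V + α`: for `t ∈ (0, 1]` the variable `W_t = V* + t (V + α - V*)`
lies in `D`, so `E[(U(W_t) - U(V*)) / t] ≤ 0`. By concavity these difference quotients increase
as `t ↓ 0`, to `(V + α - V*) U'(V*)` where `V* > 0` and to `+∞` where `V* = 0` (by the Inada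
condition, after extending `U` concavely to `0` when `U(0) > -∞`). Fatou's lemma, applied to the
quotients minus their value at `t = 1`, therefore shows `V* > 0` a.s. and yields the variational
inequality `E[(V + α - V*) U'(V*)] ≤ 0` in integrable form. Adding the gradient inequality
`(V* - α) U'(V*) ≤ U(V*) - U(α)` gives `E[V U'(V*)] ≤ E[U(V*)] - U(α)`.
-/

theorem ConcaveOn.sub_le_sub_div {s : Set ℝ} {f : ℝ → ℝ} (hf : ConcaveOn ℝ s f) {x y t : ℝ}
    (hx : x ∈ s) (hy : y ∈ s) (ht₀ : 0 < t) (ht₁ : t ≤ 1) :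
    f y - f x ≤ (f (x + t * (y - x)) - f x) / t := by
  have h := hf.2 hx hy (sub_nonneg.2 ht₁) ht₀.le (sub_add_cancel 1 t)
  rw [smul_eq_mul, smul_eq_mul, smul_eq_mul, smul_eq_mul,
    show (1 - t) * x + t * y = x + t * (y - x) by ring] at h
  rw [le_div_iff₀ ht₀]
  linarith

theorem ConcaveOn.le_add_mul_sub_of_hasDerivAt {s : Set ℝ} {f : ℝ → ℝ} {f' x y : ℝ}
    (hf : ConcaveOn ℝ s f) (hx : x ∈ s) (hy : y ∈ s) (hf' : HasDerivAt f f' x) :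
    f y ≤ f x + f' * (y - x) := by
  rcases lt_trichotomy y x with h | rfl | h
  · have := hf.le_slope_of_hasDerivAt hy hx h hf'
    rw [slope_def_field, le_div_iff₀ (sub_pos.2 h)] at this
    linarith
  · simp
  · have := hf.slope_le_of_hasDerivAt hx hy h hf'
    rw [slope_def_field, div_le_iff₀ (sub_pos.2 h)] at this
    linarith

theorem ConcaveOn.concaveOn_Ici {f : ℝ → ℝ} {a : ℝ} (hf : ConcaveOn ℝ (Ioi a) f)
    (ha : ContinuousWithinAt f (Ici a) a) : ConcaveOn ℝ (Ici a) f := by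
  have hright : ∀ x ∈ Ici a, Tendsto (fun δ => f (x + δ)) (𝓝[>] 0) (𝓝 (f x)) := by
    intro x hx
    have hshift : Tendsto (fun δ => x + δ) (𝓝[>] 0) (𝓝[Ici x] x) := by
      refine tendsto_nhdsWithin_of_tendsto_nhds_of_eventually_within _ ?_ ?_
      · simpa using ((continuous_const_add x).tendsto 0).mono_left nhdsWithin_le_nhds
      · filter_upwards [self_mem_nhdsWithin] with δ hδ
        exact le_add_of_nonneg_right (le_of_lt (mem_Ioi.1 hδ))
    rcases (mem_Ici.1 hx).eq_or_lt with rfl | hax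
    · exact ha.tendsto.comp hshift
    · have hcont : ContinuousAt f x :=
        (hf.continuousOn_interior x (by rwa [interior_Ioi])).continuousAt
          (by rw [interior_Ioi]; exact isOpen_Ioi.mem_nhds hax)
      exact hcont.tendsto.comp (hshift.mono_right nhdsWithin_le_nhds)
  refine ⟨convex_Ici a, fun x hx y hy s t hs ht hst => ?_⟩
  have hshifted : ∀ᶠ δ in 𝓝[>] 0, s • f (x + δ) + t • f (y + δ) ≤ f (s • x + t • y + δ) := by
    filter_upwards [self_mem_nhdsWithin] with δ (hδ : 0 < δ)
    have hxδ : x + δ ∈ Ioi a := mem_Ioi.2 (by linarith [mem_Ici.1 hx])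
    have hyδ : y + δ ∈ Ioi a := mem_Ioi.2 (by linarith [mem_Ici.1 hy])
    have hpt : s • (x + δ) + t • (y + δ) = s • x + t • y + δ := by
      simp only [smul_eq_mul]
      linear_combination δ * hst
    simpa only [hpt] using hf.2 hxδ hyδ hs ht hst
  exact le_of_tendsto_of_tendsto (((hright x hx).const_smul s).add ((hright y hy).const_smul t))
    (hright _ ((convex_Ici a) hx hy hs ht hst)) hshifted

theorem HasDerivAt.tendsto_sub_div_nhdsGT {f : ℝ → ℝ} {f' x : ℝ} (hf : HasDerivAt f f' x)
    (d : ℝ) : Tendsto (fun t => (f (x + t * d) - f x) / t) (𝓝[>] 0) (𝓝 (f' * d)) := by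
  have hline : HasDerivAt (fun t => f (x + t * d)) (f' * d) 0 := by
    have h := ((hasDerivAt_id (0 : ℝ)).mul_const d).const_add x
    simp only [id, one_mul] at h
    exact (show HasDerivAt f f' (x + 0 * d) by simpa using hf).comp (0 : ℝ) h
  have := (hasDerivAt_iff_tendsto_slope.1 hline).mono_left (nhdsGT_le_nhdsNE 0)
  refine this.congr fun t => ?_
  simp [slope_def_field]

theorem ConcaveOn.tendsto_sub_div_nhdsGT_atTop {f f' : ℝ → ℝ} {a y : ℝ}
    (hf : ConcaveOn ℝ (Ici a) f) (hf' : ∀ x ∈ Ioi a, HasDerivAt f (f' x) x)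
    (hInada : Tendsto f' (𝓝[>] a) atTop) (hy : a < y) :
    Tendsto (fun t => (f (a + t * (y - a)) - f a) / t) (𝓝[>] 0) atTop := by
  have hz : Tendsto (fun t => a + t * (y - a)) (𝓝[>] 0) (𝓝[>] a) := by
    refine tendsto_nhdsWithin_of_tendsto_nhds_of_eventually_within _ ?_ ?_
    · have := ((continuous_mul_const (y - a)).const_add a).tendsto 0
      simpa using this.mono_left nhdsWithin_le_nhds
    · filter_upwards [self_mem_nhdsWithin] with t (ht : 0 < t)
      exact lt_add_of_pos_right a (mul_pos ht (sub_pos.2 hy))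
  refine tendsto_atTop_mono' _ ?_ ((hInada.comp hz).atTop_mul_const (sub_pos.2 hy))
  filter_upwards [self_mem_nhdsWithin] with t (ht : 0 < t)
  have hza : a < a + t * (y - a) := lt_add_of_pos_right a (mul_pos ht (sub_pos.2 hy))
  have hgrad := hf.le_add_mul_sub_of_hasDerivAt (mem_Ici.2 hza.le) (mem_Ici.2 le_rfl) (hf' _ hza)
  rw [Function.comp_apply, le_div_iff₀ ht]
  linarith

theorem erealPosPart_coe (r : ℝ) : erealPosPart r = ENNReal.ofReal r := by
  rw [erealPosPart, if_neg (EReal.coe_ne_top r), EReal.toReal_coe]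

theorem erealPosPart_neg_coe (r : ℝ) : erealPosPart (-(r : EReal)) = ENNReal.ofReal (-r) := by
  rw [← EReal.coe_neg, erealPosPart_coe]

theorem EReal.coe_ennreal_sub_eq_bot_iff {a b : ℝ≥0∞} : (a : EReal) - b = ⊥ ↔ b = ⊤ := by
  rw [sub_eq_add_neg, EReal.add_eq_bot_iff, EReal.neg_eq_bot_iff, EReal.coe_ennreal_eq_top_iff,
    or_iff_right (EReal.coe_ennreal_ne_bot a)]

theorem EReal.coe_ennreal_ne_top_of_sub {a b : ℝ≥0∞} (htop : (a : EReal) - b ≠ ⊤)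
    (hbot : (a : EReal) - b ≠ ⊥) : a ≠ ⊤ ∧ b ≠ ⊤ := by
  have hb : b ≠ ⊤ := fun h => hbot (EReal.coe_ennreal_sub_eq_bot_iff.2 h)
  refine ⟨?_, hb⟩
  rintro rfl
  lift b to NNReal using hb
  exact htop (by simp)

section Integration

variable {Ω : Type*} [MeasurableSpace Ω] {P : Measure Ω}

theorem integrable_of_lintegral_ofReal_ne_top {g : Ω → ℝ} (hg : AEStronglyMeasurable g P)
    (hpos : ∫⁻ ω, ENNReal.ofReal (g ω) ∂P ≠ ⊤) (hneg : ∫⁻ ω, ENNReal.ofReal (-g ω) ∂P ≠ ⊤) :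
    Integrable g P := by
  refine ⟨hg, ?_⟩
  rw [hasFiniteIntegral_iff_norm]
  have habs : ∀ ω, ENNReal.ofReal ‖g ω‖ ≤ ENNReal.ofReal (g ω) + ENNReal.ofReal (-g ω) := by
    intro ω
    rcases le_total 0 (g ω) with h | h
    · rw [Real.norm_of_nonneg h]; exact le_self_add
    · rw [Real.norm_of_nonpos h]; exact le_add_self
  calc ∫⁻ ω, ENNReal.ofReal ‖g ω‖ ∂P
      ≤ ∫⁻ ω, (ENNReal.ofReal (g ω) + ENNReal.ofReal (-g ω)) ∂P := lintegral_mono habs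
    _ = (∫⁻ ω, ENNReal.ofReal (g ω) ∂P) + ∫⁻ ω, ENNReal.ofReal (-g ω) ∂P :=
        lintegral_add_left' hg.aemeasurable.ennreal_ofReal _
    _ < ⊤ := ENNReal.add_lt_top.2 ⟨hpos.lt_top, hneg.lt_top⟩

theorem coe_lintegral_ofReal_sub_coe_lintegral_ofReal_neg {g : Ω → ℝ} (hg : Integrable g P) :
    ((∫⁻ ω, ENNReal.ofReal (g ω) ∂P : ℝ≥0∞) : EReal)
      - ((∫⁻ ω, ENNReal.ofReal (-g ω) ∂P : ℝ≥0∞) : EReal) = ((∫ ω, g ω ∂P : ℝ) : EReal) := by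
  rw [integral_eq_lintegral_pos_part_sub_lintegral_neg_part hg, EReal.coe_sub,
    EReal.coe_ennreal_toReal hg.lintegral_lt_top.ne,
    EReal.coe_ennreal_toReal (Integrable.lintegral_lt_top (f := fun ω => -g ω) hg.neg).ne]

theorem lintegral_ofReal_le_add {f g h : Ω → ℝ} (hh : AEMeasurable h P)
    (hfgh : ∀ᵐ ω ∂P, f ω ≤ g ω + h ω) :
    ∫⁻ ω, ENNReal.ofReal (f ω) ∂P
      ≤ (∫⁻ ω, ENNReal.ofReal (g ω) ∂P) + ∫⁻ ω, ENNReal.ofReal (h ω) ∂P := by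
  rw [← lintegral_add_right' _ hh.ennreal_ofReal]
  exact lintegral_mono_ae (hfgh.mono fun ω hω => (ENNReal.ofReal_le_ofReal hω).trans
    ENNReal.ofReal_add_le)

theorem measure_eq_zero_of_lintegral_ne_top {f : Ω → ℝ≥0∞} {S : Set Ω} (hS : MeasurableSet S)
    (hf : ∀ ω ∈ S, f ω = ⊤) (hint : ∫⁻ ω, f ω ∂P ≠ ⊤) : P S = 0 := by
  by_contra hPS
  refine hint (top_le_iff.1 ?_)
  calc ⊤ = ∫⁻ _ in S, ⊤ ∂P := by rw [setLIntegral_const, ENNReal.top_mul hPS]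
    _ = ∫⁻ ω in S, f ω ∂P := setLIntegral_congr_fun hS fun ω hω => (hf ω hω).symm
    _ ≤ ∫⁻ ω, f ω ∂P := setLIntegral_le_lintegral S f

theorem lintegral_le_of_tendsto_ofReal_sub {ι : Type*} {l : Filter ι} [l.NeBot]
    [l.IsCountablyGenerated] {G : ι → Ω → ℝ} {G₁ : Ω → ℝ} {L : Ω → ℝ≥0∞}
    (hG : ∀ i, AEMeasurable (G i) P) (hG₁ : Integrable G₁ P)
    (hbound : ∀ᶠ i in l, Integrable (G i) P ∧ ∫ ω, G i ω ∂P ≤ 0 ∧ G₁ ≤ᵐ[P] G i)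
    (hL : ∀ᵐ ω ∂P, Tendsto (fun i => ENNReal.ofReal (G i ω - G₁ ω)) l (𝓝 (L ω))) :
    ∫⁻ ω, L ω ∂P ≤ ENNReal.ofReal (-∫ ω, G₁ ω ∂P) := by
  calc ∫⁻ ω, L ω ∂P
      = ∫⁻ ω, liminf (fun i => ENNReal.ofReal (G i ω - G₁ ω)) l ∂P :=
        lintegral_congr_ae (hL.mono fun ω h => h.liminf_eq.symm)
    _ ≤ liminf (fun i => ∫⁻ ω, ENNReal.ofReal (G i ω - G₁ ω) ∂P) l :=
        lintegral_liminf_le' fun i => ((hG i).sub hG₁.aemeasurable).ennreal_ofReal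
    _ ≤ ENNReal.ofReal (-∫ ω, G₁ ω ∂P) := by
        refine liminf_le_of_frequently_le' (hbound.mono fun i ⟨hint, hle, hG₁le⟩ => ?_).frequently
        have hsub := ofReal_integral_eq_lintegral_ofReal (f := fun ω => G i ω - G₁ ω) (hint.sub hG₁)
          (hG₁le.mono fun ω h => sub_nonneg.2 h)
        rw [integral_sub hint hG₁] at hsub
        rw [← hsub]
        exact ENNReal.ofReal_le_ofReal (by linarith)

end Integration

section ExpectedUtility

variable {Ω : Type*} [MeasurableSpace Ω] {P : Measure Ω} {U U' : ℝ → ℝ} {U₀ : EReal}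

theorem utilAt_of_pos {x : ℝ} (hx : 0 < x) : utilAt U U₀ x = U x := if_neg hx.ne'

theorem expUtil_eq_of_ae_eq {W g : Ω → ℝ} (h : ∀ᵐ ω ∂P, utilAt U U₀ (W ω) = g ω) :
    expUtil P U U₀ W = ((∫⁻ ω, ENNReal.ofReal (g ω) ∂P : ℝ≥0∞) : EReal)
      - ((∫⁻ ω, ENNReal.ofReal (-g ω) ∂P : ℝ≥0∞) : EReal) := by
  have hpos : ∫⁻ ω, erealPosPart (utilAt U U₀ (W ω)) ∂P = ∫⁻ ω, ENNReal.ofReal (g ω) ∂P :=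
    lintegral_congr_ae (h.mono fun ω hω => by simp only [hω, erealPosPart_coe])
  have hneg : ∫⁻ ω, erealPosPart (-utilAt U U₀ (W ω)) ∂P = ∫⁻ ω, ENNReal.ofReal (-g ω) ∂P :=
    lintegral_congr_ae (h.mono fun ω hω => by simp only [hω, erealPosPart_neg_coe])
  rw [expUtil, hpos, hneg]

theorem integrable_and_expUtil_eq_of_ae_eq {W g : Ω → ℝ} (hg : AEStronglyMeasurable g P)
    (h : ∀ᵐ ω ∂P, utilAt U U₀ (W ω) = g ω) (htop : expUtil P U U₀ W ≠ ⊤)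
    (hbot : expUtil P U U₀ W ≠ ⊥) :
    Integrable g P ∧ expUtil P U U₀ W = ((∫ ω, g ω ∂P : ℝ) : EReal) := by
  rw [expUtil_eq_of_ae_eq h] at htop hbot ⊢
  obtain ⟨hpos, hneg⟩ := EReal.coe_ennreal_ne_top_of_sub htop hbot
  have hint := integrable_of_lintegral_ofReal_ne_top hg hpos hneg
  exact ⟨hint, coe_lintegral_ofReal_sub_coe_lintegral_ofReal_neg hint⟩

theorem expUtil_ne_bot_of_forall_le [IsFiniteMeasure P] (hmono : MonotoneOn U (Ioi 0))
    {W : Ω → ℝ} {a : ℝ} (ha : 0 < a) (hWa : ∀ ω, a ≤ W ω) : expUtil P U U₀ W ≠ ⊥ := by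
  rw [expUtil, Ne, EReal.coe_ennreal_sub_eq_bot_iff]
  refine ne_of_lt ?_
  calc ∫⁻ ω, erealPosPart (-utilAt U U₀ (W ω)) ∂P ≤ ∫⁻ _, ENNReal.ofReal (-U a) ∂P := by
        refine lintegral_mono fun ω => ?_
        rw [utilAt_of_pos (ha.trans_le (hWa ω)), erealPosPart_neg_coe]
        exact ENNReal.ofReal_le_ofReal (neg_le_neg (hmono ha (ha.trans_le (hWa ω)) (hWa ω)))
    _ < ⊤ := by
        rw [lintegral_const]
        exact ENNReal.mul_lt_top ofReal_lt_top (measure_lt_top P univ)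

theorem ae_ne_zero_or_ne_bot_of_expUtil_ne_bot {W : Ω → ℝ} (hW : Measurable W)
    (hbot : expUtil P U U₀ W ≠ ⊥) : ∀ᵐ ω ∂P, W ω ≠ 0 ∨ U₀ ≠ ⊥ := by
  by_cases hU₀ : U₀ = ⊥
  · rw [expUtil, Ne, EReal.coe_ennreal_sub_eq_bot_iff] at hbot
    have hnull := measure_eq_zero_of_lintegral_ne_top (hW (measurableSet_singleton 0))
      (fun ω (hω : W ω = 0) => by simp [utilAt, hω, hU₀, erealPosPart]) hbot
    exact (measure_eq_zero_iff_ae_notMem.1 hnull).mono fun ω hω => Or.inl hω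
  · exact ae_of_all _ fun _ => Or.inr hU₀

/-- At `0` this is `U₀.toReal`, i.e. the junk value `0` when `U₀ = ⊥`. -/
noncomputable def utilReal (U : ℝ → ℝ) (U₀ : EReal) (x : ℝ) : ℝ :=
  if 0 < x then U x else U₀.toReal

theorem utilReal_of_pos {x : ℝ} (hx : 0 < x) : utilReal U U₀ x = U x := if_pos hx

theorem utilAt_eq_utilReal (hU₀ne : U₀ ≠ ⊤) {x : ℝ} (hx : 0 ≤ x) (h : x ≠ 0 ∨ U₀ ≠ ⊥) :
    utilAt U U₀ x = utilReal U U₀ x := by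
  rcases hx.lt_or_eq with hx | rfl
  · rw [utilAt_of_pos hx, utilReal_of_pos hx]
  · rw [utilAt, utilReal, if_pos rfl, if_neg (lt_irrefl 0),
      EReal.coe_toReal hU₀ne (h.resolve_left (not_not.2 rfl))]

theorem measurable_utilReal (hU : ContinuousOn U (Ioi 0)) : Measurable (utilReal U U₀) :=
  hU.measurable_piecewise continuousOn_const measurableSet_Ioi

theorem hasDerivAt_utilReal {x u : ℝ} (hU : HasDerivAt U u x) (hx : 0 < x) :
    HasDerivAt (utilReal U U₀) u x :=
  hU.congr_of_eventuallyEq ((eventually_gt_nhds hx).mono fun _ hy => utilReal_of_pos hy)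

theorem concaveOn_Ioi_utilReal (hconc : ConcaveOn ℝ (Ioi 0) U) :
    ConcaveOn ℝ (Ioi 0) (utilReal U U₀) :=
  hconc.congr fun _ hx => (utilReal_of_pos hx).symm

theorem concaveOn_Ici_utilReal (hconc : ConcaveOn ℝ (Ioi 0) U)
    (hU₀ : Tendsto (fun x => (U x : EReal)) (𝓝[>] 0) (𝓝 U₀)) (hU₀ne : U₀ ≠ ⊤) (hU₀bot : U₀ ≠ ⊥) :
    ConcaveOn ℝ (Ici 0) (utilReal U U₀) := by
  refine (concaveOn_Ioi_utilReal hconc).concaveOn_Ici ?_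
  rw [← continuousWithinAt_Ioi_iff_Ici, ContinuousWithinAt, utilReal, if_neg (lt_irrefl 0)]
  rw [← EReal.coe_toReal hU₀ne hU₀bot] at hU₀
  exact (EReal.tendsto_coe.1 hU₀).congr'
    (eventually_nhdsWithin_of_forall fun _ hx => (utilReal_of_pos hx).symm)

theorem utilReal_sub_le_div (hconc : ConcaveOn ℝ (Ioi 0) U)
    (hU₀ : Tendsto (fun x => (U x : EReal)) (𝓝[>] 0) (𝓝 U₀)) (hU₀ne : U₀ ≠ ⊤) {x y t : ℝ}
    (hx : 0 ≤ x) (hy : 0 < y) (hxU₀ : x ≠ 0 ∨ U₀ ≠ ⊥) (ht₀ : 0 < t) (ht₁ : t ≤ 1) :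
    utilReal U U₀ y - utilReal U U₀ x
      ≤ (utilReal U U₀ (x + t * (y - x)) - utilReal U U₀ x) / t := by
  rcases hxU₀ with hx0 | hU₀bot
  · exact (concaveOn_Ioi_utilReal hconc).sub_le_sub_div (lt_of_le_of_ne hx (Ne.symm hx0)) hy
      ht₀ ht₁
  · exact (concaveOn_Ici_utilReal hconc hU₀ hU₀ne hU₀bot).sub_le_sub_div hx hy.le ht₀ ht₁

theorem integrable_and_integral_utilReal_le [IsFiniteMeasure P] (hUc : ContinuousOn U (Ioi 0))
    (hmono : MonotoneOn U (Ioi 0)) {W X : Ω → ℝ} {a : ℝ} (hW : Measurable W) (ha : 0 < a)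
    (hWa : ∀ ω, a ≤ W ω) (hle : expUtil P U U₀ W ≤ expUtil P U U₀ X)
    (hX : expUtil P U U₀ X = ((∫ ω, utilReal U U₀ (X ω) ∂P : ℝ) : EReal)) :
    Integrable (fun ω => utilReal U U₀ (W ω)) P
      ∧ ∫ ω, utilReal U U₀ (W ω) ∂P ≤ ∫ ω, utilReal U U₀ (X ω) ∂P := by
  have htop : expUtil P U U₀ W ≠ ⊤ := ne_top_of_le_ne_top (hX ▸ EReal.coe_ne_top _) hle
  have hWU : ∀ᵐ ω ∂P, utilAt U U₀ (W ω) = utilReal U U₀ (W ω) := ae_of_all _ fun ω => by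
    rw [utilAt_of_pos (ha.trans_le (hWa ω)), utilReal_of_pos (ha.trans_le (hWa ω))]
  obtain ⟨hint, hWE⟩ := integrable_and_expUtil_eq_of_ae_eq
    ((measurable_utilReal hUc).comp hW).aestronglyMeasurable hWU htop
    (expUtil_ne_bot_of_forall_le hmono ha hWa)
  exact ⟨hint, EReal.coe_le_coe_iff.1 (hWE ▸ hX ▸ hle)⟩

theorem integrable_and_integral_utilReal_perturb_le [IsFiniteMeasure P]
    (hUc : ContinuousOn U (Ioi 0)) (hmono : MonotoneOn U (Ioi 0)) {D : Set (Ω → ℝ)}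
    (hD : Convex ℝ D) (hDmeas : ∀ W ∈ D, Measurable W) {X Y : Ω → ℝ} (hX : X ∈ D) (hY : Y ∈ D)
    (hX0 : ∀ ω, 0 ≤ X ω) {α : ℝ} (hα : 0 < α) (hYα : ∀ ω, α ≤ Y ω)
    (hle : ∀ W ∈ D, expUtil P U U₀ W ≤ expUtil P U U₀ X)
    (hXE : expUtil P U U₀ X = ((∫ ω, utilReal U U₀ (X ω) ∂P : ℝ) : EReal)) {t : ℝ}
    (ht : t ∈ Ioc (0 : ℝ) 1) :
    Integrable (fun ω => utilReal U U₀ (X ω + t * (Y ω - X ω))) P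
      ∧ ∫ ω, utilReal U U₀ (X ω + t * (Y ω - X ω)) ∂P ≤ ∫ ω, utilReal U U₀ (X ω) ∂P := by
  have hmem : (fun ω => X ω + t * (Y ω - X ω)) ∈ D := hD.add_smul_sub_mem hX hY ⟨ht.1.le, ht.2⟩
  refine integrable_and_integral_utilReal_le hUc hmono (hDmeas _ hmem) (mul_pos ht.1 hα)
    (fun ω => ?_) (hle _ hmem) hXE
  nlinarith [mul_nonneg (sub_nonneg.2 ht.2) (hX0 ω), mul_le_mul_of_nonneg_left (hYα ω) ht.1.le]

theorem tendsto_ofReal_utilReal_div_sub (hderiv : ∀ x ∈ Ioi (0 : ℝ), HasDerivAt U (U' x) x)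
    (hconc : ConcaveOn ℝ (Ioi 0) U) (hInada₀ : Tendsto U' (𝓝[>] 0) atTop)
    (hU₀ : Tendsto (fun x => (U x : EReal)) (𝓝[>] 0) (𝓝 U₀)) (hU₀ne : U₀ ≠ ⊤) {x y : ℝ}
    (hx : 0 ≤ x) (hy : 0 < y) (hxU₀ : x ≠ 0 ∨ U₀ ≠ ⊥) :
    Tendsto (fun t => ENNReal.ofReal ((utilReal U U₀ (x + t * (y - x)) - utilReal U U₀ x) / t
        - (utilReal U U₀ y - utilReal U U₀ x))) (𝓝[>] 0)
      (𝓝 (if 0 < x then ENNReal.ofReal (U' x * (y - x) - (utilReal U U₀ y - utilReal U U₀ x))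
        else ⊤)) := by
  rcases hx.lt_or_eq with hx | rfl
  · rw [if_pos hx]
    exact (ENNReal.continuous_ofReal.tendsto _).comp
      (((hasDerivAt_utilReal (hderiv x hx) hx).tendsto_sub_div_nhdsGT _).sub_const _)
  · rw [if_neg (lt_irrefl 0)]
    have hU₀bot := hxU₀.resolve_left (not_not.2 rfl)
    exact ENNReal.tendsto_ofReal_atTop.comp (tendsto_atTop_add_const_right _ _
      ((concaveOn_Ici_utilReal hconc hU₀ hU₀ne hU₀bot).tendsto_sub_div_nhdsGT_atTop
        (fun z hz => hasDerivAt_utilReal (hderiv z hz) hz) hInada₀ hy))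

theorem ae_pos_and_lintegral_le_of_optimal (hderiv : ∀ x ∈ Ioi (0 : ℝ), HasDerivAt U (U' x) x)
    (hconc : ConcaveOn ℝ (Ioi 0) U) (hInada₀ : Tendsto U' (𝓝[>] 0) atTop)
    (hU₀ : Tendsto (fun x => (U x : EReal)) (𝓝[>] 0) (𝓝 U₀)) (hU₀ne : U₀ ≠ ⊤)
    {X Y : Ω → ℝ} (hX : Measurable X) (hY : Measurable Y) (hX0 : ∀ ω, 0 ≤ X ω)
    (hY0 : ∀ ω, 0 < Y ω) (hXU₀ : ∀ᵐ ω ∂P, X ω ≠ 0 ∨ U₀ ≠ ⊥)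
    (hXint : Integrable (fun ω => utilReal U U₀ (X ω)) P)
    (hYint : Integrable (fun ω => utilReal U U₀ (Y ω)) P)
    (hopt : ∀ t ∈ Ioc (0 : ℝ) 1,
      Integrable (fun ω => utilReal U U₀ (X ω + t * (Y ω - X ω))) P
        ∧ ∫ ω, utilReal U U₀ (X ω + t * (Y ω - X ω)) ∂P ≤ ∫ ω, utilReal U U₀ (X ω) ∂P) :
    (∀ᵐ ω ∂P, 0 < X ω) ∧
      ∫⁻ ω, ENNReal.ofReal
          (U' (X ω) * (Y ω - X ω) - (utilReal U U₀ (Y ω) - utilReal U U₀ (X ω))) ∂P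
        ≤ ENNReal.ofReal (∫ ω, utilReal U U₀ (X ω) ∂P - ∫ ω, utilReal U U₀ (Y ω) ∂P) := by
  set Ũ := utilReal U U₀
  have hŨ : Measurable Ũ :=
    measurable_utilReal fun x hx => (hderiv x hx).continuousAt.continuousWithinAt
  set L : Ω → ℝ≥0∞ := fun ω =>
    if 0 < X ω then ENNReal.ofReal (U' (X ω) * (Y ω - X ω) - (Ũ (Y ω) - Ũ (X ω))) else ⊤
  have hbound : ∫⁻ ω, L ω ∂P ≤ ENNReal.ofReal (-∫ ω, Ũ (Y ω) - Ũ (X ω) ∂P) := by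
    refine lintegral_le_of_tendsto_ofReal_sub (l := 𝓝[>] 0)
      (G := fun t ω => (Ũ (X ω + t * (Y ω - X ω)) - Ũ (X ω)) / t)
      (fun t => ((hŨ.comp (hX.add ((hY.sub hX).const_mul t))).sub (hŨ.comp hX)).div_const t
        |>.aemeasurable) (hYint.sub hXint) ?_
      (hXU₀.mono fun ω h => tendsto_ofReal_utilReal_div_sub hderiv hconc hInada₀ hU₀ hU₀ne
        (hX0 ω) (hY0 ω) h)
    filter_upwards [Ioc_mem_nhdsGT one_pos] with t ht
    obtain ⟨hint, hle⟩ := hopt t ht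
    refine ⟨(hint.sub hXint).div_const t, ?_, ?_⟩
    · rw [integral_div, integral_sub hint hXint]
      exact div_nonpos_of_nonpos_of_nonneg (sub_nonpos.2 hle) ht.1.le
    · filter_upwards [hXU₀] with ω hω
      exact utilReal_sub_le_div hconc hU₀ hU₀ne (hX0 ω) (hY0 ω) hω ht.1 ht.2
  rw [integral_sub hYint hXint, neg_sub] at hbound
  have hpos : ∀ᵐ ω ∂P, 0 < X ω := by
    have hnull := measure_eq_zero_of_lintegral_ne_top (hX (measurableSet_singleton 0))
      (fun ω (hω : X ω = 0) => by simp [L, hω]) (hbound.trans_lt ofReal_lt_top).ne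
    filter_upwards [measure_eq_zero_iff_ae_notMem.1 hnull] with ω hω
      using lt_of_le_of_ne (hX0 ω) (Ne.symm hω)
  refine ⟨hpos, le_trans (le_of_eq (lintegral_congr_ae ?_)) hbound⟩
  filter_upwards [hpos] with ω hω
  simp [L, hω]

theorem coe_lintegral_ofReal_mul_deriv_le [IsProbabilityMeasure P]
    (hderiv : ∀ x ∈ Ioi (0 : ℝ), HasDerivAt U (U' x) x) (hconc : ConcaveOn ℝ (Ioi 0) U)
    (hmono : MonotoneOn U (Ioi 0)) {X V : Ω → ℝ} {α : ℝ} (hα : 0 < α) (hV : ∀ ω, 0 ≤ V ω)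
    (hpos : ∀ᵐ ω ∂P, 0 < X ω) (hYint : Integrable (fun ω => utilReal U U₀ (V ω + α)) P)
    (hYX : ∫ ω, utilReal U U₀ (V ω + α) ∂P ≤ ∫ ω, utilReal U U₀ (X ω) ∂P)
    (hvar : ∫⁻ ω, ENNReal.ofReal
          (U' (X ω) * (V ω + α - X ω) - (utilReal U U₀ (V ω + α) - utilReal U U₀ (X ω))) ∂P
        ≤ ENNReal.ofReal (∫ ω, utilReal U U₀ (X ω) ∂P - ∫ ω, utilReal U U₀ (V ω + α) ∂P)) :
    ((∫⁻ ω, ENNReal.ofReal (V ω * U' (X ω)) ∂P : ℝ≥0∞) : EReal)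
      ≤ ((∫ ω, utilReal U U₀ (X ω) ∂P - U α : ℝ) : EReal) := by
  set Ũ := utilReal U U₀
  have hYα : ∀ ω, U α ≤ Ũ (V ω + α) := fun ω => by
    have hVα : α ≤ V ω + α := le_add_of_nonneg_left (hV ω)
    rw [show Ũ (V ω + α) = U (V ω + α) from utilReal_of_pos (hα.trans_le hVα)]
    exact hmono hα (hα.trans_le hVα) hVα
  have hαY : U α ≤ ∫ ω, Ũ (V ω + α) ∂P := by
    simpa using integral_mono (integrable_const (U α)) hYint hYα
  have hsplit : ∀ᵐ ω ∂P, V ω * U' (X ω)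
      ≤ (U' (X ω) * (V ω + α - X ω) - (Ũ (V ω + α) - Ũ (X ω))) + (Ũ (V ω + α) - U α) := by
    filter_upwards [hpos] with ω hω
    have hgrad := hconc.le_add_mul_sub_of_hasDerivAt hω hα (hderiv _ hω)
    rw [show Ũ (X ω) = U (X ω) from utilReal_of_pos hω]
    linarith
  have hlin : ∫⁻ ω, ENNReal.ofReal (Ũ (V ω + α) - U α) ∂P
      = ENNReal.ofReal (∫ ω, Ũ (V ω + α) ∂P - U α) := by
    rw [← ofReal_integral_eq_lintegral_ofReal (f := fun ω => Ũ (V ω + α) - U α)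
      (hYint.sub (integrable_const _))
      (ae_of_all _ fun ω => sub_nonneg.2 (hYα ω)), integral_sub hYint (integrable_const _),
      integral_const, probReal_univ, one_smul]
  have hle : ∫⁻ ω, ENNReal.ofReal (V ω * U' (X ω)) ∂P
      ≤ ENNReal.ofReal (∫ ω, Ũ (X ω) ∂P - U α) :=
    calc ∫⁻ ω, ENNReal.ofReal (V ω * U' (X ω)) ∂P
        ≤ ENNReal.ofReal (∫ ω, Ũ (X ω) ∂P - ∫ ω, Ũ (V ω + α) ∂P)
            + ENNReal.ofReal (∫ ω, Ũ (V ω + α) ∂P - U α) :=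
          (lintegral_ofReal_le_add (hYint.aemeasurable.sub_const _) hsplit).trans
            (add_le_add hvar hlin.le)
      _ = ENNReal.ofReal (∫ ω, Ũ (X ω) ∂P - U α) := by
          rw [← ENNReal.ofReal_add (sub_nonneg.2 hYX) (sub_nonneg.2 hαY), sub_add_sub_cancel]
  calc ((∫⁻ ω, ENNReal.ofReal (V ω * U' (X ω)) ∂P : ℝ≥0∞) : EReal)
      ≤ ((ENNReal.ofReal (∫ ω, Ũ (X ω) ∂P - U α) : ℝ≥0∞) : EReal) :=
        EReal.coe_ennreal_le_coe_ennreal_iff.2 hle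
    _ = ((∫ ω, Ũ (X ω) ∂P - U α : ℝ) : EReal) := by
        rw [EReal.coe_ennreal_ofReal, max_eq_left (by linarith)]

end ExpectedUtility

theorem dual_bound_at_optimum_general
    {Ω : Type*} [MeasurableSpace Ω] (P : Measure Ω) [IsProbabilityMeasure P]
    (U U' : ℝ → ℝ) (U₀ : EReal)
    (hderiv : ∀ x ∈ Set.Ioi (0 : ℝ), HasDerivAt U (U' x) x)
    (hmono : StrictMonoOn U (Set.Ioi 0))
    (hconc : StrictConcaveOn ℝ (Set.Ioi 0) U)
    (hInada₀ : Tendsto U' (nhdsWithin 0 (Set.Ioi 0)) atTop)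
    (hU₀ : Tendsto (fun x : ℝ => (U x : EReal)) (nhdsWithin 0 (Set.Ioi 0)) (nhds U₀))
    (hU₀ne : U₀ ≠ ⊤)
    (D : Set (Ω → ℝ)) (hD : Convex ℝ D)
    (hDmeas : ∀ W ∈ D, Measurable W) (hDnonneg : ∀ W ∈ D, ∀ ω, 0 ≤ W ω)
    (α : ℝ) (hα : 0 < α)
    (Vstar : Ω → ℝ) (hVD : Vstar ∈ D)
    (hopt : expUtil P U U₀ Vstar = ⨆ W ∈ D, expUtil P U U₀ W)
    (hfin : expUtil P U U₀ Vstar ≠ ⊤) :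
    ∀ V : Ω → ℝ, (∀ ω, 0 ≤ V ω) → (fun ω => V ω + α) ∈ D →
      ((∫⁻ ω, ENNReal.ofReal (V ω * U' (Vstar ω)) ∂P : ℝ≥0∞) : EReal)
        ≤ expUtil P U U₀ Vstar - ((U α : ℝ) : EReal)
      ∧ expUtil P U U₀ Vstar - ((U α : ℝ) : EReal) < ⊤ := by
  intro V hV hVα
  have hUc : ContinuousOn U (Ioi 0) := fun x hx => (hderiv x hx).continuousAt.continuousWithinAt
  have hle : ∀ W ∈ D, expUtil P U U₀ W ≤ expUtil P U U₀ Vstar :=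
    fun W hW => hopt ▸ le_iSup₂ (f := fun W (_ : W ∈ D) => expUtil P U U₀ W) W hW
  have hbot : expUtil P U U₀ Vstar ≠ ⊥ := ne_bot_of_le_ne_bot
    (expUtil_ne_bot_of_forall_le hmono.monotoneOn hα fun ω => le_add_of_nonneg_left (hV ω))
    (hle _ hVα)
  have hXU₀ := ae_ne_zero_or_ne_bot_of_expUtil_ne_bot (hDmeas _ hVD) hbot
  obtain ⟨hXint, hXE⟩ := integrable_and_expUtil_eq_of_ae_eq
    ((measurable_utilReal hUc).comp (hDmeas _ hVD)).aestronglyMeasurable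
    (hXU₀.mono fun ω h => utilAt_eq_utilReal hU₀ne (hDnonneg _ hVD ω) h) hfin hbot
  have hpert := fun t (ht : t ∈ Ioc (0 : ℝ) 1) => integrable_and_integral_utilReal_perturb_le
    hUc hmono.monotoneOn hD hDmeas hVD hVα (hDnonneg _ hVD) hα
    (fun ω => le_add_of_nonneg_left (hV ω)) hle hXE ht
  have hY := hpert 1 ⟨one_pos, le_rfl⟩
  simp only [one_mul, add_sub_cancel] at hY
  obtain ⟨hpos, hvar⟩ := ae_pos_and_lintegral_le_of_optimal hderiv hconc.concaveOn hInada₀ hU₀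
    hU₀ne (hDmeas _ hVD) (hDmeas _ hVα) (hDnonneg _ hVD) (fun ω => add_pos_of_nonneg_of_pos (hV ω) hα)
    hXU₀ hXint hY.1 hpert
  rw [hXE, ← EReal.coe_sub]
  exact ⟨coe_lintegral_ofReal_mul_deriv_le hderiv hconc.concaveOn hmono.monotoneOn hα hV hpos
    hY.1 hY.2 hvar, EReal.coe_lt_top _⟩

/-- Let `U : (0,∞) → ℝ` be continuously differentiable, strictly
increasing and strictly concave, with `U'(0+) = +∞`, `U'(∞) = 0` and
`limsup_{x→∞} x U'(x)/U(x) < 1`; extend `U` to `0` by `U(0) = lim_{x↓0} U(x) ∈ [−∞, ∞)`.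
Let `D` be a convex set of nonnegative random variables with well-defined expected
utilities, let `α > 0` with `U(α) > −∞`, and let `V* ∈ D` satisfy
`E[U(V*)] = sup_{W ∈ D} E[U(W)] < ∞`. Then for every nonnegative random variable `V`
with `V + α ∈ D` one has `E[V · U'(V*)] ≤ E[U(V*)] − U(α) < ∞`. -/
theorem dual_bound_at_optimum
    {Ω : Type*} [MeasurableSpace Ω] (P : Measure Ω) [IsProbabilityMeasure P]
    (U U' : ℝ → ℝ) (U₀ : EReal)
    (hderiv : ∀ x ∈ Set.Ioi (0 : ℝ), HasDerivAt U (U' x) x)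
    (hU'cont : ContinuousOn U' (Set.Ioi 0))
    (hmono : StrictMonoOn U (Set.Ioi 0))
    (hconc : StrictConcaveOn ℝ (Set.Ioi 0) U)
    (hInada₀ : Tendsto U' (nhdsWithin 0 (Set.Ioi 0)) atTop)
    (hInadaTop : Tendsto U' atTop (nhds 0))
    (hRAE : Filter.limsup (fun x : ℝ => x * U' x / U x) atTop < 1)
    (hU₀ : Tendsto (fun x : ℝ => (U x : EReal)) (nhdsWithin 0 (Set.Ioi 0)) (nhds U₀))
    (hU₀ne : U₀ ≠ ⊤)
    (D : Set (Ω → ℝ)) (hD : Convex ℝ D)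
    (hDmeas : ∀ W ∈ D, Measurable W) (hDnonneg : ∀ W ∈ D, ∀ ω, 0 ≤ W ω)
    (hDwd : ∀ W ∈ D, ExpUtilWellDef P U U₀ W)
    (α : ℝ) (hα : 0 < α)
    (Vstar : Ω → ℝ) (hVD : Vstar ∈ D)
    (hopt : expUtil P U U₀ Vstar = ⨆ W ∈ D, expUtil P U U₀ W)
    (hfin : expUtil P U U₀ Vstar ≠ ⊤) :
    ∀ V : Ω → ℝ, (∀ ω, 0 ≤ V ω) → (fun ω => V ω + α) ∈ D →
      ((∫⁻ ω, ENNReal.ofReal (V ω * U' (Vstar ω)) ∂P : ℝ≥0∞) : EReal)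
        ≤ expUtil P U U₀ Vstar - ((U α : ℝ) : EReal)
      ∧ expUtil P U U₀ Vstar - ((U α : ℝ) : EReal) < ⊤ :=
  dual_bound_at_optimum_general P U U' U₀ hderiv hmono hconc hInada₀ hU₀ hU₀ne D hD hDmeas hDnonneg
    α hα Vstar hVD hopt hfin
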